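/- arXiv:1803.07374 — 8 statements merged into one kernel-verified Lean document; each statement's English description precedes it below -/
import Mathlib

section
/- Let $f, h$ be differentiable functions on an open convex set $Q \subseteq \mathbb{R}^n$ and $L > 0$. Then $f$ is $L$-smooth relative to $h$ on $Q$ (i.e., $f(x) \leq f(y) + \langle \nabla f(y), x-y\rangle + L D_h(x,y)$ for all $x,y \in Q$) if and only if the function $L h - f$ is convex on $Q$. -/
/-!
With `g = L h - f`, the relative smoothness inequality is a rearrangement of the tangent-plane
inequality `g y + ⟪∇g y, x - y⟫ ≤ g x`. A differentiable function on a convex set is convex iff it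
lies above all its tangent planes: averaging the tangent inequalities at a convex combination
`z = a x + b y` gives convexity, and conversely the slope bound for the convex function
`t ↦ g (y + t (x - y))` on `[0, 1]` gives the tangent inequality at `y`.
-/

open RealInnerProductSpace

theorem convexOn_of_forall_le_add_apply_sub {E : Type*} [AddCommGroup E] [Module ℝ E]
    {s : Set E} {g : E → ℝ} (hs : Convex ℝ s) (φ : E → E →ₗ[ℝ] ℝ)
    (hφ : ∀ x ∈ s, ∀ y ∈ s, g y + φ y (x - y) ≤ g x) : ConvexOn ℝ s g := by
  refine ⟨hs, fun x hx y hy a b ha hb hab => ?_⟩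
  set z := a • x + b • y
  have hz : z ∈ s := hs hx hy ha hb hab
  have hbalance : a • (x - z) + b • (y - z) = 0 :=
    calc a • (x - z) + b • (y - z) = z - (a + b) • z := by simp only [z]; module
      _ = 0 := by rw [hab, one_smul, sub_self]
  have hφz : a * φ z (x - z) + b * φ z (y - z) = 0 := by
    simpa using congrArg (φ z) hbalance
  have hx' := mul_le_mul_of_nonneg_left (hφ x hx z hz) ha
  have hy' := mul_le_mul_of_nonneg_left (hφ y hy z hz) hb
  simp only [smul_eq_mul]
  linear_combination hx' + hy' - hφz - g z * hab

theorem ConvexOn.le_add_apply_sub_of_hasFDerivAt {E : Type*} [NormedAddCommGroup E]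
    [NormedSpace ℝ E] {s : Set E} {g : E → ℝ} {g' : E →L[ℝ] ℝ} {x y : E}
    (hg : ConvexOn ℝ s g) (hx : x ∈ s) (hy : y ∈ s) (hd : HasFDerivAt g g' y) :
    g y + g' (x - y) ≤ g x := by
  have hline : ConvexOn ℝ (Set.Icc (0 : ℝ) 1) (g ∘ AffineMap.lineMap y x) :=
    (hg.comp_affineMap _).subset (hg.1.mapsTo_lineMap hy hx) (convex_Icc 0 1)
  have hderiv : HasDerivAt (g ∘ AffineMap.lineMap y x) (g' (x - y)) (0 : ℝ) := by
    refine HasFDerivAt.comp_hasDerivAt (f := AffineMap.lineMap y x) 0 ?_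
      AffineMap.hasDerivAt_lineMap
    simpa using hd
  have hslope := hline.le_slope_of_hasDerivAt ⟨le_rfl, zero_le_one⟩ ⟨zero_le_one, le_rfl⟩
    one_pos hderiv
  simp only [slope_def_field, Function.comp_apply, AffineMap.lineMap_apply_zero,
    AffineMap.lineMap_apply_one, sub_zero, div_one] at hslope
  linarith

theorem convexOn_iff_forall_le_add_fderiv {E : Type*} [NormedAddCommGroup E]
    [NormedSpace ℝ E] {s : Set E} {g : E → ℝ} {g' : E → E →L[ℝ] ℝ} (hs : Convex ℝ s)
    (hd : ∀ y ∈ s, HasFDerivAt g (g' y) y) :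
    ConvexOn ℝ s g ↔ ∀ x ∈ s, ∀ y ∈ s, g y + g' y (x - y) ≤ g x :=
  ⟨fun hg _ hx y hy => hg.le_add_apply_sub_of_hasFDerivAt hx hy (hd y hy),
    convexOn_of_forall_le_add_apply_sub hs fun y => (g' y : E →ₗ[ℝ] ℝ)⟩

theorem stmt_2_general {n : ℕ} (Q : Set (EuclideanSpace ℝ (Fin n)))
    (hQc : Convex ℝ Q)
    (f h : EuclideanSpace ℝ (Fin n) → ℝ)
    (f' h' : EuclideanSpace ℝ (Fin n) → EuclideanSpace ℝ (Fin n))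
    (L : ℝ)
    (hdf : ∀ x ∈ Q, HasGradientAt f (f' x) x)
    (hdh : ∀ x ∈ Q, HasGradientAt h (h' x) x) :
    (∀ x ∈ Q, ∀ y ∈ Q,
        f x ≤ f y + ⟪f' y, x - y⟫ + L * (h x - h y - ⟪h' y, x - y⟫)) ↔
      ConvexOn ℝ Q (fun x => L * h x - f x) := by
  have hd : ∀ y ∈ Q, HasFDerivAt (fun x => L * h x - f x)
      (L • InnerProductSpace.toDual ℝ _ (h' y) - InnerProductSpace.toDual ℝ _ (f' y)) y :=
    fun y hy => ((hasGradientAt_iff_hasFDerivAt.mp (hdh y hy)).const_mul L).sub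
      (hasGradientAt_iff_hasFDerivAt.mp (hdf y hy))
  rw [convexOn_iff_forall_le_add_fderiv hQc hd]
  simp only [sub_apply, smul_apply, InnerProductSpace.toDual_apply_apply, smul_eq_mul]
  exact forall₂_congr fun x _ => forall₂_congr fun y _ => by
    constructor <;> intro <;> linarith

/-- `f` is `L`-smooth relative to `h` on an open convex set `Q` iff `L•h - f` is
convex on `Q`. -/
theorem stmt_2 {n : ℕ} (Q : Set (EuclideanSpace ℝ (Fin n)))
    (hQo : IsOpen Q) (hQc : Convex ℝ Q)
    (f h : EuclideanSpace ℝ (Fin n) → ℝ)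
    (f' h' : EuclideanSpace ℝ (Fin n) → EuclideanSpace ℝ (Fin n))
    (L : ℝ) (hL : 0 < L)
    (hdf : ∀ x ∈ Q, HasGradientAt f (f' x) x)
    (hdh : ∀ x ∈ Q, HasGradientAt h (h' x) x) :
    (∀ x ∈ Q, ∀ y ∈ Q,
        f x ≤ f y + ⟪f' y, x - y⟫ + L * (h x - h y - ⟪h' y, x - y⟫)) ↔
      ConvexOn ℝ Q (fun x => L * h x - f x) :=
  stmt_2_general Q hQc f h f' h' L hdf hdh
end

section
/- Let $f$ be $L$-smooth relative to $h$ on an open convex set $Q$. Then $\langle \nabla f(x) - \nabla f(y), x - y\rangle \leq L \langle \nabla h(x) - \nabla h(y), x - y\rangle$ for all $x, y \in Q$. -/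
open RealInnerProductSpace

theorem inner_sub_le_of_relSmooth_symm {E : Type*} [NormedAddCommGroup E] [InnerProductSpace ℝ E]
    {f h : E → ℝ} {f' h' : E → E} {L : ℝ} {x y : E}
    (hxy : f x ≤ f y + ⟪f' y, x - y⟫ + L * (h x - h y - ⟪h' y, x - y⟫))
    (hyx : f y ≤ f x + ⟪f' x, y - x⟫ + L * (h y - h x - ⟪h' x, y - x⟫)) :
    ⟪f' x - f' y, x - y⟫ ≤ L * ⟪h' x - h' y, x - y⟫ := by
  rw [← neg_sub x y, inner_neg_right, inner_neg_right] at hyx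
  rw [inner_sub_left, inner_sub_left]
  linarith

theorem stmt_4_general {n : ℕ} (Q : Set (EuclideanSpace ℝ (Fin n)))
    (f h : EuclideanSpace ℝ (Fin n) → ℝ)
    (f' h' : EuclideanSpace ℝ (Fin n) → EuclideanSpace ℝ (Fin n))
    (L : ℝ)
    (hsmooth : ∀ x ∈ Q, ∀ y ∈ Q,
      f x ≤ f y + ⟪f' y, x - y⟫ + L * (h x - h y - ⟪h' y, x - y⟫)) :
    ∀ x ∈ Q, ∀ y ∈ Q,
      ⟪f' x - f' y, x - y⟫ ≤ L * ⟪h' x - h' y, x - y⟫ :=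
  fun x hx y hy => inner_sub_le_of_relSmooth_symm (hsmooth x hx y hy) (hsmooth y hy x hx)

/-- Relative `L`-smoothness implies the gradient co-monotonicity inequality. -/
theorem stmt_4 {n : ℕ} (Q : Set (EuclideanSpace ℝ (Fin n)))
    (hQo : IsOpen Q) (hQc : Convex ℝ Q)
    (f h : EuclideanSpace ℝ (Fin n) → ℝ)
    (f' h' : EuclideanSpace ℝ (Fin n) → EuclideanSpace ℝ (Fin n))
    (L : ℝ)
    (hdf : ∀ x ∈ Q, HasGradientAt f (f' x) x)
    (hdh : ∀ x ∈ Q, HasGradientAt h (h' x) x)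
    (hsmooth : ∀ x ∈ Q, ∀ y ∈ Q,
      f x ≤ f y + ⟪f' y, x - y⟫ + L * (h x - h y - ⟪h' y, x - y⟫)) :
    ∀ x ∈ Q, ∀ y ∈ Q,
      ⟪f' x - f' y, x - y⟫ ≤ L * ⟪h' x - h' y, x - y⟫ :=
  stmt_4_general Q f h f' h' L hsmooth
end

section
/- Let $f$ be twice continuously differentiable on an open convex set $Q \subseteq \mathbb{R}^n$, and suppose $L \nabla^2 h(x) \succeq \nabla^2 f(x)$ for all $x \in Q$ (in the sense of positive semidefinite ordering), where $h$ is also twice continuously differentiable. Then $f$ is $L$-smooth relative to $h$ on $Q$, i.e., $f(x) \leq f(y) + \langle \nabla f(y), x-y\rangle + L D_h(x,y)$ for all $x, y \in Q$. -/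
/-! The function `L h - f` has a positive semidefinite Hessian on `Q`. Restricted to a segment of
`Q` it is therefore a convex function of one variable, so it lies above its tangent line; the
tangent-line inequality for `L h - f` at `y`, evaluated at `x`, is the claim. -/

open RealInnerProductSpace Set

theorem add_deriv_mul_le_of_deriv2_nonneg {φ φ' φ'' : ℝ → ℝ} {a b : ℝ} (hab : a < b)
    (hφ : ∀ t ∈ Icc a b, HasDerivAt φ (φ' t) t)
    (hφ' : ∀ t ∈ Icc a b, HasDerivAt φ' (φ'' t) t)
    (hφ'' : ∀ t ∈ Icc a b, 0 ≤ φ'' t) :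
    φ a + φ' a * (b - a) ≤ φ b := by
  have hint : ∀ t ∈ interior (Icc a b), t ∈ Icc a b := fun t ht => interior_subset ht
  have hconv : ConvexOn ℝ (Icc a b) φ :=
    convexOn_of_hasDerivWithinAt2_nonneg (convex_Icc a b)
      (fun t ht => (hφ t ht).continuousAt.continuousWithinAt)
      (fun t ht => (hφ t (hint t ht)).hasDerivWithinAt)
      (fun t ht => (hφ' t (hint t ht)).hasDerivWithinAt)
      (fun t ht => hφ'' t (hint t ht))
  have hslope := hconv.le_slope_of_hasDerivAt (left_mem_Icc.2 hab.le) (right_mem_Icc.2 hab.le)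
    hab (hφ a (left_mem_Icc.2 hab.le))
  rw [slope_def_field, le_div_iff₀ (sub_pos.2 hab)] at hslope
  linarith

section Gradient

variable {F : Type*} [NormedAddCommGroup F] [InnerProductSpace ℝ F] [CompleteSpace F]

theorem HasGradientAt.const_mul_sub {f g : F → ℝ} {f' g' x : F} (c : ℝ)
    (hf : HasGradientAt f f' x) (hg : HasGradientAt g g' x) :
    HasGradientAt (fun z => c * f z - g z) (c • f' - g') x := by
  rw [hasGradientAt_iff_hasFDerivAt, map_sub, map_smul]
  exact (hf.hasFDerivAt.const_mul c).sub hg.hasFDerivAt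

theorem Convex.add_inner_gradient_le_of_hessian_nonneg {s : Set F} (hs : Convex ℝ s)
    {g : F → ℝ} {g' : F → F} {g'' : F → F →L[ℝ] F}
    (hg : ∀ x ∈ s, HasGradientAt g (g' x) x) (hg' : ∀ x ∈ s, HasFDerivAt g' (g'' x) x)
    (hg'' : ∀ x ∈ s, ∀ v, 0 ≤ ⟪g'' x v, v⟫) {x y : F} (hx : x ∈ s) (hy : y ∈ s) :
    g y + ⟪g' y, x - y⟫ ≤ g x := by
  set c : ℝ → F := fun t => y + t • (x - y)
  have hc : ∀ t, HasDerivAt c (x - y) t := fun t => by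
    simpa only [id, one_smul] using ((hasDerivAt_id t).smul_const (x - y)).const_add y
  have hcs : ∀ t ∈ Icc (0 : ℝ) 1, c t ∈ s := fun t ht => hs.add_smul_sub_mem hy hx ht
  have key := add_deriv_mul_le_of_deriv2_nonneg (φ := g ∘ c)
    (φ' := fun t => ⟪g' (c t), x - y⟫) (φ'' := fun t => ⟪g'' (c t) (x - y), x - y⟫)
    zero_lt_one
    (fun t ht => by simpa using (hg _ (hcs t ht)).hasFDerivAt.comp_hasDerivAt t (hc t))
    (fun t ht => by
      simpa using ((hg' _ (hcs t ht)).comp_hasDerivAt t (hc t)).inner ℝ (hasDerivAt_const t _))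
    (fun t ht => hg'' _ (hcs t ht) _)
  simpa [c] using key

end Gradient

theorem stmt_5_general {n : ℕ} (Q : Set (EuclideanSpace ℝ (Fin n)))
    (hQc : Convex ℝ Q)
    (f h : EuclideanSpace ℝ (Fin n) → ℝ)
    (f' h' : EuclideanSpace ℝ (Fin n) → EuclideanSpace ℝ (Fin n))
    (f'' h'' : EuclideanSpace ℝ (Fin n) →
      (EuclideanSpace ℝ (Fin n) →L[ℝ] EuclideanSpace ℝ (Fin n)))
    (L : ℝ)
    (hdf : ∀ x ∈ Q, HasGradientAt f (f' x) x)
    (hdh : ∀ x ∈ Q, HasGradientAt h (h' x) x)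
    (hdf' : ∀ x ∈ Q, HasFDerivAt f' (f'' x) x)
    (hdh' : ∀ x ∈ Q, HasFDerivAt h' (h'' x) x)
    (hhess : ∀ x ∈ Q, ∀ v : EuclideanSpace ℝ (Fin n),
      ⟪f'' x v, v⟫ ≤ L * ⟪h'' x v, v⟫) :
    ∀ x ∈ Q, ∀ y ∈ Q,
      f x ≤ f y + ⟪f' y, x - y⟫ + L * (h x - h y - ⟪h' y, x - y⟫) := by
  intro x hx y hy
  have hconv := hQc.add_inner_gradient_le_of_hessian_nonneg
    (g := fun z => L * h z - f z) (g' := fun z => L • h' z - f' z)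
    (g'' := fun z => L • h'' z - f'' z)
    (fun z hz => (hdh z hz).const_mul_sub L (hdf z hz))
    (fun z hz => ((hdh' z hz).const_smul L).sub (hdf' z hz))
    (fun z hz v => by
      simpa only [sub_apply, smul_apply, inner_sub_left, real_inner_smul_left, sub_nonneg]
        using hhess z hz v)
    hx hy
  simp only [inner_sub_left, real_inner_smul_left] at hconv
  linarith

/-- Hessian domination `L ∇²h ⪰ ∇²f` on an open convex set implies relative
`L`-smoothness of `f` w.r.t. `h`. -/
theorem stmt_5 {n : ℕ} (Q : Set (EuclideanSpace ℝ (Fin n)))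
    (hQo : IsOpen Q) (hQc : Convex ℝ Q)
    (f h : EuclideanSpace ℝ (Fin n) → ℝ)
    (f' h' : EuclideanSpace ℝ (Fin n) → EuclideanSpace ℝ (Fin n))
    (f'' h'' : EuclideanSpace ℝ (Fin n) →
      (EuclideanSpace ℝ (Fin n) →L[ℝ] EuclideanSpace ℝ (Fin n)))
    (L : ℝ)
    (hdf : ∀ x ∈ Q, HasGradientAt f (f' x) x)
    (hdh : ∀ x ∈ Q, HasGradientAt h (h' x) x)
    (hdf' : ∀ x ∈ Q, HasFDerivAt f' (f'' x) x)
    (hdh' : ∀ x ∈ Q, HasFDerivAt h' (h'' x) x)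
    (hcf : ContinuousOn f'' Q) (hch : ContinuousOn h'' Q)
    (hhess : ∀ x ∈ Q, ∀ v : EuclideanSpace ℝ (Fin n),
      ⟪f'' x v, v⟫ ≤ L * ⟪h'' x v, v⟫) :
    ∀ x ∈ Q, ∀ y ∈ Q,
      f x ≤ f y + ⟪f' y, x - y⟫ + L * (h x - h y - ⟪h' y, x - y⟫) :=
  stmt_5_general Q hQc f h f' h' f'' h'' L hdf hdh hdf' hdh' hhess
end

section
/- (Three point property) Let $\phi, h$ be differentiable convex functions on a convex set $Q \subseteq \mathbb{R}^n$, with $D_h$ the Bregman distance of $h$. Fix $z \in Q$ and suppose $z_+ \in Q$ minimizes $x \mapsto \phi(x) + D_h(x,z)$ over $Q$. Then for all $x \in Q$: $\phi(x) + D_h(x,z) \geq \phi(z_+) + D_h(z_+, z) + D_h(x, z_+)$. -/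
/-!
Expanding the three Bregman distances, `D_h(x, z) - D_h(z₊, z) - D_h(x, z₊)` equals
`⟪∇h(z₊) - ∇h(z), x - z₊⟫`, so the claim reduces to
`φ(x) - φ(z₊) + ⟪∇h(z₊) - ∇h(z), x - z₊⟫ ≥ 0`. This follows by adding the gradient inequality
`φ(x) - φ(z₊) ≥ ⟪∇φ(z₊), x - z₊⟫` of the convex function `φ` to the first-order optimality
condition `⟪∇φ(z₊) + ∇h(z₊) - ∇h(z), x - z₊⟫ ≥ 0` of `z₊` on the convex set `Q`.
-/

open RealInnerProductSpace Set

section FirstOrder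

variable {E : Type*} [NormedAddCommGroup E] [NormedSpace ℝ E] {s : Set E} {f : E → ℝ}
  {f' : E →L[ℝ] ℝ} {x y : E}

theorem ConvexOn.le_sub_of_hasFDerivWithinAt (hf : ConvexOn ℝ s f) (hx : x ∈ s) (hy : y ∈ s)
    (hf' : HasFDerivWithinAt f f' s x) : f' (y - x) ≤ f y - f x := by
  have hconv : ConvexOn ℝ (AffineMap.lineMap (k := ℝ) x y ⁻¹' s)
      (f ∘ AffineMap.lineMap (k := ℝ) x y) :=
    hf.comp_affineMap _
  have hderiv : HasDerivWithinAt (f ∘ AffineMap.lineMap (k := ℝ) x y) (f' (y - x))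
      (AffineMap.lineMap (k := ℝ) x y ⁻¹' s) 0 := by
    refine hf'.comp_hasDerivWithinAt_of_eq (0 : ℝ) AffineMap.hasDerivWithinAt_lineMap
      (mapsTo_preimage _ _) ?_
    simp
  simpa [slope_def_field] using
    hconv.le_slope_of_hasDerivWithinAt (by simpa) (by simpa) one_pos hderiv

theorem IsMinOn.hasFDerivWithinAt_sub_nonneg (hmin : IsMinOn f s x) (hs : Convex ℝ s)
    (hx : x ∈ s) (hy : y ∈ s) (hf' : HasFDerivWithinAt f f' s x) : 0 ≤ f' (y - x) :=
  hmin.localize.hasFDerivWithinAt_nonneg hf' <|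
    sub_mem_posTangentConeAt_of_segment_subset (hs.segment_subset hx hy)

end FirstOrder

section Bregman

variable {F : Type*} [NormedAddCommGroup F] [InnerProductSpace ℝ F]

/-- `bregmanDiv h h' x y` is `D_h(x, y)`, with `h'` standing for `∇h`. -/
def bregmanDiv (h : F → ℝ) (h' : F → F) (x y : F) : ℝ :=
  h x - h y - ⟪h' y, x - y⟫

theorem bregmanDiv_eq_add_add_inner (h : F → ℝ) (h' : F → F) (x y z : F) :
    bregmanDiv h h' x z = bregmanDiv h h' y z + bregmanDiv h h' x y + ⟪h' y - h' z, x - y⟫ := by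
  simp only [bregmanDiv, inner_sub_left, inner_sub_right]
  ring

theorem hasFDerivAt_bregmanDiv_left [CompleteSpace F] {h : F → ℝ} {h' : F → F} {y : F} (z : F)
    (hh : HasGradientAt h (h' y) y) :
    HasFDerivAt (bregmanDiv h h' · z) (InnerProductSpace.toDual ℝ F (h' y - h' z)) y := by
  rw [map_sub]
  refine (hh.hasFDerivAt.sub_const (h z)).sub ?_
  simpa [inner_sub_right] using
    ((InnerProductSpace.toDual ℝ F (h' z)).hasFDerivAt (x := y)).sub_const ⟪h' z, z⟫

end Bregman

theorem stmt_6_general {n : ℕ} (Q : Set (EuclideanSpace ℝ (Fin n))) (hQ : Convex ℝ Q)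
    (φ h : EuclideanSpace ℝ (Fin n) → ℝ)
    (φ' h' : EuclideanSpace ℝ (Fin n) → EuclideanSpace ℝ (Fin n))
    (hφconv : ConvexOn ℝ Q φ)
    (hdφ : ∀ x ∈ Q, HasGradientAt φ (φ' x) x)
    (hdh : ∀ x ∈ Q, HasGradientAt h (h' x) x)
    (z : EuclideanSpace ℝ (Fin n))
    (zp : EuclideanSpace ℝ (Fin n)) (hzp : zp ∈ Q)
    (hmin : ∀ x ∈ Q,
      φ zp + (h zp - h z - ⟪h' z, zp - z⟫) ≤ φ x + (h x - h z - ⟪h' z, x - z⟫)) :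
    ∀ x ∈ Q,
      φ x + (h x - h z - ⟪h' z, x - z⟫) ≥
        φ zp + (h zp - h z - ⟪h' z, zp - z⟫) +
          (h x - h zp - ⟪h' zp, x - zp⟫) := by
  intro x hx
  have hφ : ⟪φ' zp, x - zp⟫ ≤ φ x - φ zp := by
    simpa using hφconv.le_sub_of_hasFDerivWithinAt hzp hx
      (hdφ zp hzp).hasFDerivAt.hasFDerivWithinAt
  have hopt : 0 ≤ ⟪φ' zp, x - zp⟫ + (⟪h' zp, x - zp⟫ - ⟪h' z, x - zp⟫) := by
    have hobj := (hdφ zp hzp).hasFDerivAt.add (hasFDerivAt_bregmanDiv_left z (hdh zp hzp))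
    rw [← map_add] at hobj
    simpa using IsMinOn.hasFDerivWithinAt_sub_nonneg (f := fun v ↦ φ v + bregmanDiv h h' v z)
      hmin hQ hzp hx hobj.hasFDerivWithinAt
  have hthreePoint := bregmanDiv_eq_add_add_inner h h' x zp z
  simp only [bregmanDiv, inner_sub_left] at hthreePoint
  linarith

/-- Three point property. -/
theorem stmt_6 {n : ℕ} (Q : Set (EuclideanSpace ℝ (Fin n))) (hQ : Convex ℝ Q)
    (φ h : EuclideanSpace ℝ (Fin n) → ℝ)
    (φ' h' : EuclideanSpace ℝ (Fin n) → EuclideanSpace ℝ (Fin n))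
    (hφconv : ConvexOn ℝ Q φ) (hhconv : ConvexOn ℝ Q h)
    (hdφ : ∀ x ∈ Q, HasGradientAt φ (φ' x) x)
    (hdh : ∀ x ∈ Q, HasGradientAt h (h' x) x)
    (z : EuclideanSpace ℝ (Fin n)) (hz : z ∈ Q)
    (zp : EuclideanSpace ℝ (Fin n)) (hzp : zp ∈ Q)
    (hmin : ∀ x ∈ Q,
      φ zp + (h zp - h z - ⟪h' z, zp - z⟫) ≤ φ x + (h x - h z - ⟪h' z, x - z⟫)) :
    ∀ x ∈ Q,
      φ x + (h x - h z - ⟪h' z, x - z⟫) ≥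
        φ zp + (h zp - h z - ⟪h' z, zp - z⟫) +
          (h x - h zp - ⟪h' zp, x - zp⟫) :=
  stmt_6_general Q hQ φ h φ' h' hφconv hdφ hdh z zp hzp hmin
end

section
/- Define the symmetry measure $\alpha(h) = \inf\{D_h(x,y)/D_h(y,x) : x \neq y\}$ for a strictly convex differentiable $h$. If $f$ is $\mu$-strongly convex relative to $h$ with minimizer $x_*$ of $f$ over $Q$ (so that $\langle \nabla f(x_*), x - x_*\rangle \geq 0$ for all $x \in Q$), then for any $x \in Q$: $f(x) - f(x_*) \geq \mu\, \alpha(h)\, D_h(x_*, x)$. -/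
/-!
Strong convexity relative to `h` at `x_*`, together with first-order optimality, gives
`f x - f x_* ≥ μ D_h(x, x_*)`, and `D_h(x, x_*) ≥ α(h) D_h(x_*, x)` by definition of `α(h)`.
The infimum defining `α(h)` is well behaved because strict convexity makes the Bregman distance
between distinct points positive.
-/

open RealInnerProductSpace

theorem StrictConvexOn.comp_affineMap {𝕜 E F β : Type*} [Ring 𝕜] [PartialOrder 𝕜]
    [AddCommGroup E] [AddCommGroup F] [AddCommMonoid β] [PartialOrder β] [Module 𝕜 E]
    [Module 𝕜 F] [SMul 𝕜 β] {f : F → β} {s : Set F} (g : E →ᵃ[𝕜] F)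
    (hg : Function.Injective g) (hf : StrictConvexOn 𝕜 s f) :
    StrictConvexOn 𝕜 (g ⁻¹' s) (f ∘ g) :=
  ⟨hf.1.affine_preimage g, fun x hx y hy hxy a b ha hb hab => by
    simpa only [Function.comp_apply, Convex.combo_affine_apply hab]
      using hf.2 hx hy (hg.ne hxy) ha hb hab⟩

theorem StrictConvexOn.hasFDerivAt_lt_sub {E : Type*} [NormedAddCommGroup E] [NormedSpace ℝ E]
    {s : Set E} {h : E → ℝ} {h' : E →L[ℝ] ℝ} {x y : E} (hh : StrictConvexOn ℝ s h)
    (hx : x ∈ s) (hy : y ∈ s) (hxy : x ≠ y) (hd : HasFDerivAt h h' x) :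
    h' (y - x) < h y - h x := by
  let ℓ : ℝ →ᵃ[ℝ] E := AffineMap.lineMap x y
  have hline : StrictConvexOn ℝ (ℓ ⁻¹' s) (h ∘ ℓ) :=
    hh.comp_affineMap ℓ (AffineMap.lineMap_injective ℝ hxy)
  have hderiv : HasDerivAt (h ∘ ℓ) (h' (y - x)) 0 := by
    refine HasFDerivAt.comp_hasDerivAt (0 : ℝ) ?_ AffineMap.hasDerivAt_lineMap
    simpa [ℓ] using hd
  have hslope := hline.lt_slope_of_hasDerivAt (x := 0) (y := 1)
    (by simpa [ℓ] using hx) (by simpa [ℓ] using hy) one_pos hderiv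
  simpa [ℓ, slope_def_field] using hslope

section Bregman

variable {E : Type*} [NormedAddCommGroup E] [InnerProductSpace ℝ E]

/-- The Bregman distance `D_h(x, y)`: the gap at `x` above the tangent to `h` at `y`. -/
def bregmanDist (h : E → ℝ) (h' : E → E) (x y : E) : ℝ :=
  h x - h y - ⟪h' y, x - y⟫

variable {Q : Set E} {h : E → ℝ} {h' : E → E}

theorem bregmanDist_self (x : E) : bregmanDist h h' x x = 0 := by
  simp [bregmanDist]

variable [CompleteSpace E]

theorem bregmanDist_pos (hh : StrictConvexOn ℝ Q h) (hdh : ∀ x ∈ Q, HasGradientAt h (h' x) x)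
    {x y : E} (hx : x ∈ Q) (hy : y ∈ Q) (hxy : x ≠ y) :
    0 < bregmanDist h h' x y := by
  have htangent := hh.hasFDerivAt_lt_sub hy hx hxy.symm (hdh y hy).hasFDerivAt
  rw [InnerProductSpace.toDual_apply_apply] at htangent
  unfold bregmanDist
  linarith

theorem bregmanDist_nonneg (hh : StrictConvexOn ℝ Q h)
    (hdh : ∀ x ∈ Q, HasGradientAt h (h' x) x) {x y : E} (hx : x ∈ Q) (hy : y ∈ Q) :
    0 ≤ bregmanDist h h' x y := by
  rcases eq_or_ne x y with rfl | hxy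
  · exact (bregmanDist_self x).ge
  · exact (bregmanDist_pos hh hdh hx hy hxy).le

/-- The symmetry coefficient `α(h)`. -/
noncomputable def bregmanSymmetry (Q : Set E) (h : E → ℝ) (h' : E → E) : ℝ :=
  sInf {r | ∃ x ∈ Q, ∃ y ∈ Q, x ≠ y ∧ r = bregmanDist h h' x y / bregmanDist h h' y x}

theorem bregmanSymmetry_mul_le (hh : StrictConvexOn ℝ Q h)
    (hdh : ∀ x ∈ Q, HasGradientAt h (h' x) x) {x y : E} (hx : x ∈ Q) (hy : y ∈ Q) :
    bregmanSymmetry Q h h' * bregmanDist h h' y x ≤ bregmanDist h h' x y := by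
  rcases eq_or_ne x y with rfl | hxy
  · simp [bregmanDist_self]
  have hpos := bregmanDist_pos hh hdh hy hx hxy.symm
  have hbdd : BddBelow {r | ∃ x ∈ Q, ∃ y ∈ Q, x ≠ y ∧
      r = bregmanDist h h' x y / bregmanDist h h' y x} := by
    refine ⟨0, ?_⟩
    rintro _ ⟨a, ha, b, hb, -, rfl⟩
    exact div_nonneg (bregmanDist_nonneg hh hdh ha hb) (bregmanDist_nonneg hh hdh hb ha)
  rw [← le_div_iff₀ hpos]
  exact csInf_le hbdd ⟨x, hx, y, hy, hxy, rfl⟩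

end Bregman

theorem stmt_9_general {n : ℕ} (Q : Set (EuclideanSpace ℝ (Fin n)))
    (f h : EuclideanSpace ℝ (Fin n) → ℝ)
    (f' h' : EuclideanSpace ℝ (Fin n) → EuclideanSpace ℝ (Fin n))
    (hstrict : StrictConvexOn ℝ Q h)
    (hdh : ∀ x ∈ Q, HasGradientAt h (h' x) x)
    (μ : ℝ) (hμ : 0 ≤ μ)
    (α : ℝ)
    (hα : α = sInf {r : ℝ | ∃ x ∈ Q, ∃ y ∈ Q, x ≠ y ∧
      r = (h x - h y - ⟪h' y, x - y⟫) / (h y - h x - ⟪h' x, y - x⟫)})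
    (hsc : ∀ x ∈ Q, ∀ y ∈ Q,
      f y ≥ f x + ⟪f' x, y - x⟫ + μ * (h y - h x - ⟪h' x, y - x⟫))
    (xs : EuclideanSpace ℝ (Fin n)) (hxs : xs ∈ Q)
    (hopt : ∀ x ∈ Q, 0 ≤ ⟪f' xs, x - xs⟫) :
    ∀ x ∈ Q, f x - f xs ≥ μ * α * (h xs - h x - ⟪h' x, xs - x⟫) := by
  intro x hx
  change α = bregmanSymmetry Q h h' at hα
  have hgrowth : μ * bregmanDist h h' x xs ≤ f x - f xs := by
    have hsc_xs := hsc xs hxs x hx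
    unfold bregmanDist
    linarith [hopt x hx]
  have hsymm : α * bregmanDist h h' xs x ≤ bregmanDist h h' x xs :=
    hα ▸ bregmanSymmetry_mul_le hstrict hdh hx hxs
  calc μ * α * bregmanDist h h' xs x ≤ μ * bregmanDist h h' x xs := by
        rw [mul_assoc]; exact mul_le_mul_of_nonneg_left hsymm hμ
    _ ≤ f x - f xs := hgrowth

/-- Suboptimality lower bound via the symmetry measure of the Bregman distance. -/
theorem stmt_9 {n : ℕ} (Q : Set (EuclideanSpace ℝ (Fin n))) (hQ : Convex ℝ Q)
    (f h : EuclideanSpace ℝ (Fin n) → ℝ)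
    (f' h' : EuclideanSpace ℝ (Fin n) → EuclideanSpace ℝ (Fin n))
    (hstrict : StrictConvexOn ℝ Q h)
    (hdf : ∀ x ∈ Q, HasGradientAt f (f' x) x)
    (hdh : ∀ x ∈ Q, HasGradientAt h (h' x) x)
    (μ : ℝ) (hμ : 0 ≤ μ)
    (α : ℝ)
    (hα : α = sInf {r : ℝ | ∃ x ∈ Q, ∃ y ∈ Q, x ≠ y ∧
      r = (h x - h y - ⟪h' y, x - y⟫) / (h y - h x - ⟪h' x, y - x⟫)})
    (hsc : ∀ x ∈ Q, ∀ y ∈ Q,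
      f y ≥ f x + ⟪f' x, y - x⟫ + μ * (h y - h x - ⟪h' x, y - x⟫))
    (xs : EuclideanSpace ℝ (Fin n)) (hxs : xs ∈ Q)
    (hopt : ∀ x ∈ Q, 0 ≤ ⟪f' xs, x - xs⟫) :
    ∀ x ∈ Q, f x - f xs ≥ μ * α * (h xs - h x - ⟪h' x, xs - x⟫) :=
  stmt_9_general Q f h f' h' hstrict hdh μ hμ α hα hsc xs hxs hopt
end

section
/- Let $\{f_t\}_{t\geq 0}$, $\{D_t\}_{t\geq 0}$ be nonnegative real sequences, $f_* \in \mathbb{R}$, and $\delta, \varphi, \psi$ reals with $0 < \delta \leq 1$ and $0 < \psi \leq \varphi$. Suppose for all $t \geq 0$: $f_{t+1} \leq (1-\delta) f_t + \delta f_* + (\varphi - \delta\psi) D_t - \varphi D_{t+1}$. Then for every $k \geq 1$, with $C_t = (\varphi/(\varphi - \delta\psi))^{t-1} \cdot (\varphi - \psi)/(\delta^{-1}\varphi - \psi)$ for $1 \leq t \leq k-1$ and $C_k = (\varphi/(\varphi - \delta\psi))^{k-1}$, and $c_t = C_t / \sum_{s=1}^k C_s$, it holds that $\sum_{t=1}^k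 c_t (f_t - f_*) \leq \frac{(\varphi - \delta\psi) D_0 + (1-\delta)(f_0 - f_*)}{1 - \varphi/\psi + (\varphi/\psi)(\varphi/(\varphi - \delta\psi))^{k-1}}$. -/
/-!
Put `r = φ / (φ - δψ)` and `e_t = f_t - f_*`. Multiplying the `t`-th inequality by `r ^ t` makes
the `D`-terms telescope, because `r (φ - δψ) = φ`; hence, with `c = 1 - (1 - δ) r`, the potential
`∑_{t<n} c r^t e_{t+1} + r^n (e_{n+1} + φ D_{n+1})` is nonincreasing in `n` and so bounded by
`(φ - δψ) D_0 + (1 - δ) e_0`. For `n = k - 1`, after dropping `r^n φ D_k ≥ 0`, the coefficients of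
`e_1, …, e_k` are exactly `C_1, …, C_k`, and since `c = (r - 1)(φ/ψ - 1)` their sum is the
geometric series `1 - φ/ψ + (φ/ψ) r^(k-1)`.
-/

open Finset

theorem sum_Icc_one_eq_sum_range {M : Type*} [AddCommMonoid M] (g : ℕ → M) (m : ℕ) :
    ∑ t ∈ Icc 1 m, g t = ∑ i ∈ range m, g (i + 1) := by
  rw [range_eq_Ico, sum_Ico_add', zero_add, Ico_add_one_right_eq_Icc]

theorem sum_geom_weights_add_pow {R : Type*} [CommRing R] (r q : R) (m : ℕ) :
    ∑ i ∈ range m, (r - 1) * (q - 1) * r ^ i + r ^ m = 1 - q + q * r ^ m := by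
  rw [← mul_sum]
  linear_combination (q - 1) * geom_sum_mul r m

section GeometricWeights

variable {C : ℕ → ℝ} {c r : ℝ} {m : ℕ}

theorem sum_Icc_mul_of_geometric (hC : ∀ i < m, C (i + 1) = c * r ^ i) (hCm : C (m + 1) = r ^ m)
    (x : ℕ → ℝ) :
    ∑ t ∈ Icc 1 (m + 1), C t * x t =
      ∑ i ∈ range m, c * r ^ i * x (i + 1) + r ^ m * x (m + 1) := by
  rw [sum_Icc_one_eq_sum_range, sum_range_succ, hCm,
    sum_congr rfl fun i hi => by rw [hC i (mem_range.1 hi)]]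

theorem sum_Icc_of_geometric {q : ℝ} (hC : ∀ i < m, C (i + 1) = (r - 1) * (q - 1) * r ^ i)
    (hCm : C (m + 1) = r ^ m) :
    ∑ t ∈ Icc 1 (m + 1), C t = 1 - q + q * r ^ m := by
  simpa only [mul_one, sum_geom_weights_add_pow] using sum_Icc_mul_of_geometric hC hCm fun _ => 1

theorem potential_le_of_contraction {a b φ : ℝ} {e D : ℕ → ℝ} (hrb : r * b = φ) (hcr : c + a * r = 1)
    (hr : 0 ≤ r) (hrec : ∀ t, e (t + 1) ≤ a * e t + b * D t - φ * D (t + 1)) (n : ℕ) :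
    ∑ i ∈ range n, c * r ^ i * e (i + 1) + r ^ n * (e (n + 1) + φ * D (n + 1)) ≤
      b * D 0 + a * e 0 := by
  induction n with
  | zero =>
    simp only [range_zero, sum_empty, pow_zero]
    linarith [hrec 0]
  | succ n ih =>
    have step := mul_le_mul_of_nonneg_left (hrec (n + 1)) (pow_nonneg hr (n + 1))
    rw [sum_range_succ]
    linear_combination ih + step + r ^ n * e (n + 1) * hcr + r ^ n * D (n + 1) * hrb

theorem sum_Icc_mul_le_of_contraction {a b φ : ℝ} {e D : ℕ → ℝ} (hrb : r * b = φ)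
    (hcr : c + a * r = 1) (hr : 0 ≤ r) (hφ : 0 ≤ φ) (hD : 0 ≤ D (m + 1))
    (hrec : ∀ t, e (t + 1) ≤ a * e t + b * D t - φ * D (t + 1))
    (hC : ∀ i < m, C (i + 1) = c * r ^ i) (hCm : C (m + 1) = r ^ m) :
    ∑ t ∈ Icc 1 (m + 1), C t * e t ≤ b * D 0 + a * e 0 := by
  have hpot := potential_le_of_contraction hrb hcr hr hrec m
  have hDm : 0 ≤ r ^ m * (φ * D (m + 1)) := by positivity
  rw [sum_Icc_mul_of_geometric hC hCm]
  linarith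

end GeometricWeights

theorem stmt_10_general (f D : ℕ → ℝ) (hD : ∀ t, 0 ≤ D t)
    (fs δ φ ψ : ℝ) (hδ0 : 0 < δ) (hψ0 : 0 < ψ)
    (hpos : 0 < φ - δ * ψ)
    (hrec : ∀ t, f (t + 1) ≤ (1 - δ) * f t + δ * fs + (φ - δ * ψ) * D t - φ * D (t + 1))
    (k : ℕ) (hk : 1 ≤ k)
    (C : ℕ → ℝ)
    (hC : ∀ t, 1 ≤ t → t ≤ k - 1 →
      C t = (φ / (φ - δ * ψ)) ^ (t - 1) * (φ - ψ) / (δ⁻¹ * φ - ψ))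
    (hCk : C k = (φ / (φ - δ * ψ)) ^ (k - 1)) :
    ∑ t ∈ Finset.Icc 1 k, (C t / ∑ s ∈ Finset.Icc 1 k, C s) * (f t - fs) ≤
      ((φ - δ * ψ) * D 0 + (1 - δ) * (f 0 - fs)) /
        (1 - φ / ψ + φ / ψ * (φ / (φ - δ * ψ)) ^ (k - 1)) := by
  obtain ⟨m, rfl⟩ : ∃ m, k = m + 1 := ⟨k - 1, by omega⟩
  rw [Nat.add_sub_cancel] at hC hCk ⊢
  set r := φ / (φ - δ * ψ)
  have hδψ : 0 < δ * ψ := mul_pos hδ0 hψ0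
  have hr1 : 1 ≤ r := (one_le_div hpos).2 (by linarith)
  have hCgeom : ∀ i < m, C (i + 1) = (r - 1) * (φ / ψ - 1) * r ^ i := by
    intro i hi
    rw [hC (i + 1) (by omega) (by omega), Nat.add_sub_cancel]
    simp only [r]
    field_simp
    ring
  have hS := sum_Icc_of_geometric hCgeom hCk
  have hSpos : 0 < 1 - φ / ψ + φ / ψ * r ^ m := by
    have : 0 ≤ φ / ψ * (r ^ m - 1) :=
      mul_nonneg (div_nonneg (by linarith) hψ0.le) (sub_nonneg.2 (one_le_pow₀ hr1))
    linarith
  have hcr : (r - 1) * (φ / ψ - 1) + (1 - δ) * r = 1 := by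
    simp only [r]
    field_simp
    ring
  rw [hS]
  simp_rw [div_mul_eq_mul_div _ (1 - φ / ψ + φ / ψ * r ^ m)]
  rw [← sum_div, div_le_div_iff_of_pos_right hSpos]
  exact sum_Icc_mul_le_of_contraction (div_mul_cancel₀ φ hpos.ne') hcr (by linarith) (by linarith)
    (hD (m + 1)) (fun t => by linarith [hrec t]) hCgeom hCk

/-- Key technical lemma: convergence rate from a per-iteration decrease. -/
theorem stmt_10 (f D : ℕ → ℝ) (hf : ∀ t, 0 ≤ f t) (hD : ∀ t, 0 ≤ D t)
    (fs δ φ ψ : ℝ) (hδ0 : 0 < δ) (hδ1 : δ ≤ 1) (hψ0 : 0 < ψ) (hψφ : ψ ≤ φ)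
    (hpos : 0 < φ - δ * ψ)
    (hrec : ∀ t, f (t + 1) ≤ (1 - δ) * f t + δ * fs + (φ - δ * ψ) * D t - φ * D (t + 1))
    (k : ℕ) (hk : 1 ≤ k)
    (C : ℕ → ℝ)
    (hC : ∀ t, 1 ≤ t → t ≤ k - 1 →
      C t = (φ / (φ - δ * ψ)) ^ (t - 1) * (φ - ψ) / (δ⁻¹ * φ - ψ))
    (hCk : C k = (φ / (φ - δ * ψ)) ^ (k - 1)) :
    ∑ t ∈ Finset.Icc 1 k, (C t / ∑ s ∈ Finset.Icc 1 k, C s) * (f t - fs) ≤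
      ((φ - δ * ψ) * D 0 + (1 - δ) * (f 0 - fs)) /
        (1 - φ / ψ + φ / ψ * (φ / (φ - δ * ψ)) ^ (k - 1)) :=
  stmt_10_general f D hD fs δ φ ψ hδ0 hψ0 hpos hrec k hk C hC hCk
end

section
/- For every $\alpha > 0$ there exists a convex continuous function $\gamma_\alpha : (0,\infty) \to \mathbb{R}$ satisfying the functional equation $\gamma_\alpha(x + \alpha) = \log(x) + \gamma_\alpha(x)$ for all $x > 0$. -/
/-! The rescaled log-Gamma function `γ_α x = log Γ(x / α) + (x / α) log α` works: the functional
equation `Γ(y + 1) = y Γ(y)` at `y = x / α` gives `log (x / α)`, and the linear term supplies the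
missing `log α`. Convexity is Bohr–Mollerup's log-convexity of `Γ`, and a convex function on an open
interval is continuous. -/

open Real Set

theorem ConvexOn.comp_div_const_Ioi {f : ℝ → ℝ} {c : ℝ} (hf : ConvexOn ℝ (Ioi 0) f) (hc : 0 < c) :
    ConvexOn ℝ (Ioi 0) fun x => f (x / c) := by
  have h := hf.comp_linearMap (c⁻¹ • LinearMap.id)
  rw [show ⇑(c⁻¹ • LinearMap.id : ℝ →ₗ[ℝ] ℝ) = (c⁻¹ * ·) from rfl,
    preimage_const_mul_Ioi₀ 0 (inv_pos.2 hc), zero_div] at h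
  simpa only [Function.comp_def, div_eq_inv_mul] using h

theorem Real.log_Gamma_add_one {y : ℝ} (hy : 0 < y) :
    log (Gamma (y + 1)) = log y + log (Gamma y) := by
  rw [Gamma_add_one hy.ne', log_mul hy.ne' (Gamma_pos_of_pos hy).ne']

theorem rescale_add_one_eq_log_add {f : ℝ → ℝ} (hf : ∀ y, 0 < y → f (y + 1) = log y + f y)
    {α x : ℝ} (hα : 0 < α) (hx : 0 < x) :
    f ((x + α) / α) + (x + α) / α * log α = log x + (f (x / α) + x / α * log α) := by
  rw [add_div, div_self hα.ne', hf _ (div_pos hx hα), log_div hx.ne' hα.ne']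
  ring

/-- Existence of a convex continuous solution `γ_α` of the functional equation
`γ_α(x + α) = log x + γ_α(x)` on the positive reals. -/
theorem stmt_12 (α : ℝ) (hα : 0 < α) :
    ∃ γ : ℝ → ℝ, ConvexOn ℝ (Set.Ioi (0 : ℝ)) γ ∧
      ContinuousOn γ (Set.Ioi (0 : ℝ)) ∧
      ∀ x : ℝ, 0 < x → γ (x + α) = Real.log x + γ x := by
  have hconvex : ConvexOn ℝ (Ioi 0) fun x => log (Gamma (x / α)) + x / α * log α :=
    (convexOn_log_Gamma.comp_div_const_Ioi hα).add <|
      (LinearMap.id.smulRight (log α / α)).convexOn (convex_Ioi 0) |>.congr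
        fun x _ => by simp only [LinearMap.smulRight_apply, LinearMap.id_apply, smul_eq_mul]; ring
  exact ⟨_, hconvex, hconvex.continuousOn isOpen_Ioi,
    fun x hx => rescale_add_one_eq_log_add (f := log ∘ Gamma) (fun _ => log_Gamma_add_one) hα hx⟩
end

section
/- Let $\alpha > 0$ and let $\Gamma_\alpha = \exp(\gamma_\alpha)$ where $\gamma_\alpha : (0,\infty) \to \mathbb{R}$ is convex, continuous, and satisfies $\gamma_\alpha(x+\alpha) = \log(x) + \gamma_\alpha(x)$ (so $\Gamma_\alpha(x+\alpha) = x\,\Gamma_\alpha(x)$). Then for all $0 \leq s \leq \alpha$ and $x > 0$: $x^{1 - s/\alpha} \leq \Gamma_\alpha(x+\alpha)/\Gamma_\alpha(x+s) \leq (x+\alpha)^{1 - s/\alpha}$. -/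
/-!
Write `t = s / α ∈ [0, 1]`. Since `x + s = (1 - t) x + t (x + α)`, convexity of `γ` together with
`γ (x + α) = log x + γ x` gives `γ (x + s) ≤ γ (x + α) - (1 - t) log x`. Since likewise
`x + α = t (x + s) + (1 - t) (x + s + α)`, convexity and the functional equation at `x + s` give
`γ (x + α) ≤ γ (x + s) + (1 - t) log (x + s) ≤ γ (x + s) + (1 - t) log (x + α)`.
Exponentiating yields both bounds.
-/

open Real Set

section LogShift

variable {α : ℝ} {γ : ℝ → ℝ}

theorem ConvexOn.one_sub_mul_log_le_sub_of_add_eq_log_add (hconv : ConvexOn ℝ (Ioi 0) γ)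
    (hfe : ∀ x : ℝ, 0 < x → γ (x + α) = log x + γ x) (hα : 0 < α) {t x : ℝ}
    (ht0 : 0 ≤ t) (ht1 : t ≤ 1) (hx : 0 < x) :
    (1 - t) * log x ≤ γ (x + α) - γ (x + t * α) := by
  have hconvex : γ ((1 - t) • x + t • (x + α)) ≤ (1 - t) • γ x + t • γ (x + α) :=
    hconv.2 (mem_Ioi.2 hx) (mem_Ioi.2 (by linarith)) (by linarith) ht0 (by ring)
  have hpoint : (1 - t) • x + t • (x + α) = x + t * α := by
    simp only [smul_eq_mul]; ring
  rw [hpoint, smul_eq_mul, smul_eq_mul] at hconvex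
  rw [hfe x hx] at hconvex ⊢
  linarith

theorem ConvexOn.sub_le_one_sub_mul_log_of_add_eq_log_add (hconv : ConvexOn ℝ (Ioi 0) γ)
    (hfe : ∀ x : ℝ, 0 < x → γ (x + α) = log x + γ x) (hα : 0 < α) {t x : ℝ}
    (ht0 : 0 ≤ t) (ht1 : t ≤ 1) (hx : 0 < x) :
    γ (x + α) - γ (x + t * α) ≤ (1 - t) * log (x + α) := by
  set y := x + t * α
  have hy : 0 < y := by positivity
  have hconvex : γ (t • y + (1 - t) • (y + α)) ≤ t • γ y + (1 - t) • γ (y + α) :=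
    hconv.2 (mem_Ioi.2 hy) (mem_Ioi.2 (by linarith)) ht0 (by linarith) (by ring)
  have hpoint : t • y + (1 - t) • (y + α) = x + α := by
    simp only [y, smul_eq_mul]; ring
  rw [hpoint, smul_eq_mul, smul_eq_mul, hfe y hy] at hconvex
  have hlog : (1 - t) * log y ≤ (1 - t) * log (x + α) :=
    mul_le_mul_of_nonneg_left (log_le_log hy (by nlinarith)) (by linarith)
  linarith

end LogShift

theorem stmt_13_general (α : ℝ) (hα : 0 < α) (γ : ℝ → ℝ)
    (hconv : ConvexOn ℝ (Set.Ioi (0 : ℝ)) γ)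
    (hfe : ∀ x : ℝ, 0 < x → γ (x + α) = Real.log x + γ x)
    (s : ℝ) (hs0 : 0 ≤ s) (hsα : s ≤ α) (x : ℝ) (hx : 0 < x) :
    x ^ (1 - s / α) ≤ Real.exp (γ (x + α)) / Real.exp (γ (x + s)) ∧
      Real.exp (γ (x + α)) / Real.exp (γ (x + s)) ≤ (x + α) ^ (1 - s / α) := by
  have ht0 : 0 ≤ s / α := div_nonneg hs0 hα.le
  have ht1 : s / α ≤ 1 := (div_le_one hα).2 hsα
  have hs : x + s = x + s / α * α := by rw [div_mul_cancel₀ s hα.ne']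
  rw [← exp_sub, hs, rpow_def_of_pos hx, rpow_def_of_pos (by linarith), mul_comm (log x),
    mul_comm (log (x + α))]
  exact ⟨exp_le_exp.2 (hconv.one_sub_mul_log_le_sub_of_add_eq_log_add hfe hα ht0 ht1 hx),
    exp_le_exp.2 (hconv.sub_le_one_sub_mul_log_of_add_eq_log_add hfe hα ht0 ht1 hx)⟩

/-- Gautschi-type inequality for the generalized Gamma function `Γ_α = exp ∘ γ_α`. -/
theorem stmt_13 (α : ℝ) (hα : 0 < α) (γ : ℝ → ℝ)
    (hconv : ConvexOn ℝ (Set.Ioi (0 : ℝ)) γ)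
    (hcont : ContinuousOn γ (Set.Ioi (0 : ℝ)))
    (hfe : ∀ x : ℝ, 0 < x → γ (x + α) = Real.log x + γ x)
    (s : ℝ) (hs0 : 0 ≤ s) (hsα : s ≤ α) (x : ℝ) (hx : 0 < x) :
    x ^ (1 - s / α) ≤ Real.exp (γ (x + α)) / Real.exp (γ (x + s)) ∧
      Real.exp (γ (x + α)) / Real.exp (γ (x + s)) ≤ (x + α) ^ (1 - s / α) :=
  stmt_13_general α hα γ hconv hfe s hs0 hsα x hx
end
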